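/- arXiv:alg-geom/9711018 — 2 statements merged into one kernel-verified Lean document; each statement's English description precedes it below -/
import Mathlib

section
/- Let $k$ be a field, $R = k[x,y]$, and let $M = R^2/\langle x e_1 - y e_0 \rangle$ be the quotient of the free module $R^2$ with basis $e_0, e_1$ by the submodule generated by $x e_1 - y e_0$. Then the dual module $M^\vee = \mathrm{Hom}_R(M, R)$ is a free $R$-module of rank $1$. -/
/-!
A functional `φ` on `R²` kills `a e₁ - b e₀` iff `a φ(e₁) = b φ(e₀)`. When `a` is prime and does
not divide `b`, this forces `φ(e₀) = a c` and `φ(e₁) = b c`, so the dual of the quotient is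
identified with the span of the single form `w ↦ a w₀ + b w₁`, which is free of rank one.
For `R = k[x,y]` take `a = x`, `b = y`.
-/

open MvPolynomial

/-- The Koszul relation element `x • e₁ - y • e₀` in `R² = Fin 2 → k[x,y]`. -/
noncomputable def koszulRel (k : Type*) [Field k] : Fin 2 → MvPolynomial (Fin 2) k :=
  (X 0 : MvPolynomial (Fin 2) k) • (Pi.single 1 1 : Fin 2 → MvPolynomial (Fin 2) k)
    - (X 1 : MvPolynomial (Fin 2) k) • (Pi.single 0 1 : Fin 2 → MvPolynomial (Fin 2) k)

section KoszulDual

variable {R : Type*} [CommRing R]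

def koszulForm (a b : R) : Module.Dual R (Fin 2 → R) :=
  a • LinearMap.proj 0 + b • LinearMap.proj 1

@[simp]
theorem koszulForm_apply (a b : R) (w : Fin 2 → R) : koszulForm a b w = a * w 0 + b * w 1 := by
  simp [koszulForm]

theorem koszulForm_ne_zero [Nontrivial R] {a : R} (ha : a ≠ 0) (b : R) : koszulForm a b ≠ 0 :=
  fun h => ha <| by simpa using LinearMap.congr_fun h (Pi.single 0 1)

theorem dualAnnihilator_span_koszul [IsDomain R] {a b : R} (ha : Prime a) (hab : ¬a ∣ b) :
    (Submodule.span R {a • Pi.single 1 1 - b • Pi.single 0 1}).dualAnnihilator =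
      R ∙ koszulForm a b := by
  ext φ
  have hann : φ ∈ (Submodule.span R {a • Pi.single 1 1 - b • Pi.single 0 1}).dualAnnihilator ↔
      a * φ (Pi.single 1 1) = b * φ (Pi.single 0 1) := by
    rw [Submodule.mem_dualAnnihilator, ← sub_eq_zero, ← smul_eq_mul, ← smul_eq_mul, ← map_smul,
      ← map_smul, ← map_sub, ← LinearMap.mem_ker, ← Submodule.span_singleton_le_iff_mem]
    rfl
  rw [hann, Submodule.mem_span_singleton]
  constructor
  · intro hφ
    obtain ⟨c, hc⟩ := (ha.dvd_or_dvd ⟨_, hφ.symm⟩).resolve_left hab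
    have h1 : φ (Pi.single 1 1) = b * c :=
      mul_left_cancel₀ ha.ne_zero (by rw [hφ, hc]; ring)
    refine ⟨c, ?_⟩
    ext i
    fin_cases i <;> simp [hc, h1, mul_comm]
  · rintro ⟨c, rfl⟩
    simp only [LinearMap.smul_apply, koszulForm_apply, Pi.single_eq_same, ne_eq, zero_ne_one,
      one_ne_zero, not_false_eq_true, Pi.single_eq_of_ne, mul_zero, mul_one, zero_add, add_zero,
      smul_eq_mul]
    ring

end KoszulDual

theorem stmt2 (k : Type*) [Field k] :
    Nonempty
      (Module.Dual (MvPolynomial (Fin 2) k)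
          ((Fin 2 → MvPolynomial (Fin 2) k) ⧸
            Submodule.span (MvPolynomial (Fin 2) k) {koszulRel k})
        ≃ₗ[MvPolynomial (Fin 2) k] MvPolynomial (Fin 2) k) := by
  have hX : ¬(X 0 : MvPolynomial (Fin 2) k) ∣ X 1 := by rw [X_dvd_X]; decide
  exact ⟨Submodule.dualQuotEquivDualAnnihilator _ ≪≫ₗ
    LinearEquiv.ofEq _ _ (dualAnnihilator_span_koszul X_prime hX) ≪≫ₗ
    (LinearEquiv.toSpanNonzeroSingleton _ _ _ (koszulForm_ne_zero (X_ne_zero 0) _)).symm⟩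
end

section
/- Let $k$ be a field, $R = k[x,y]$, and $M = R^2/\langle x e_1 - y e_0 \rangle$. The cokernel of the canonical evaluation map $\rho : M \to M^{\vee\vee}$ into the double dual has dimension $1$ as a $k$-vector space. -/
/-!
The functional `φ(u, v) = x u + y v` kills `x e₁ - y e₀`, so it is a form on `M`. Since `x, y`
is a regular sequence, every form on `M` is a multiple of `φ`: a form is determined by its values
`u, v` on `e₀, e₁`, subject to `x v = y u`, which forces `u = x g`, `v = y g`. Thus `M^∨ ≅ R`,
`M^∨∨ ≅ R`, and under these identifications `ρ` becomes `φ`, whose image is the ideal `(x, y)`.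
Hence `coker ρ ≅ R / (x, y) ≅ k`.
-/

open MvPolynomial

open Module

section

variable {σ R : Type*} [CommRing R]

theorem MvPolynomial.ker_aeval_zero :
    RingHom.ker (aeval (0 : σ → R) : MvPolynomial σ R →ₐ[R] R) = Ideal.span (Set.range X) := by
  ext p
  rw [← Set.image_univ, mem_ideal_span_X_image, RingHom.mem_ker, aeval_zero, constantCoeff_eq]
  constructor
  · intro h m hm
    have hm0 : m ≠ 0 := by rintro rfl; exact mem_support_iff.1 hm h
    obtain ⟨i, hi⟩ := Finsupp.ne_iff.1 hm0
    exact ⟨i, Set.mem_univ i, hi⟩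
  · intro h
    by_contra h0
    obtain ⟨i, -, hi⟩ := h 0 (mem_support_iff.2 h0)
    exact hi rfl

theorem MvPolynomial.finrank_quotient_span_range_X [Nontrivial R] :
    finrank R (MvPolynomial σ R ⧸ Ideal.span (Set.range (X : σ → MvPolynomial σ R))) = 1 := by
  rw [← ker_aeval_zero, (Ideal.quotientKerAlgEquivOfSurjective (f := aeval (0 : σ → R))
    fun r => ⟨C r, by simp⟩).toLinearEquiv.finrank_eq, finrank_self]

end

section

variable {R M : Type*} [CommRing R] [AddCommGroup M] [Module R M]

noncomputable def Module.Dual.cokernelEvalEquivOfBijective {φ : Dual R M}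
    (hφ : Function.Bijective (LinearMap.toSpanSingleton R (Dual R M) φ)) :
    (Dual R (Dual R M) ⧸ LinearMap.range (Dual.eval R M)) ≃ₗ[R] R ⧸ LinearMap.range φ :=
  let e := (LinearEquiv.ofBijective _ hφ).dualMap.trans (LinearMap.ringLmapEquivSelf R R R)
  Submodule.Quotient.equiv _ _ e <| by
    have : e.toLinearMap ∘ₗ Dual.eval R M = φ := LinearMap.ext fun m => one_smul R (φ m)
    rw [← this, LinearMap.range_comp]

end

namespace Koszul

variable {R : Type*} [CommRing R] (a b : R)

def relation : Fin 2 → R := a • Pi.single 1 1 - b • Pi.single 0 1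

abbrev Quotient := (Fin 2 → R) ⧸ Submodule.span R {relation a b}

noncomputable def form : Dual R (Quotient a b) :=
  Submodule.liftQ _ (Fintype.linearCombination R ![a, b]) <| by
    rw [Submodule.span_le, Set.singleton_subset_iff, SetLike.mem_coe, LinearMap.mem_ker]
    simp [relation, Fintype.linearCombination_apply, mul_comm]

@[simp]
theorem form_mk (v : Fin 2 → R) : form a b (Submodule.Quotient.mk v) = v 0 * a + v 1 * b := by
  simp [form, Fintype.linearCombination_apply]

theorem range_form : LinearMap.range (form a b) = Ideal.span {a, b} := by
  rw [form, Submodule.range_liftQ, Fintype.range_linearCombination, Matrix.range_cons_cons_empty]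

variable {a b}

theorem injective_toSpanSingleton_form (ha : IsRegular a) :
    Function.Injective (LinearMap.toSpanSingleton R (Dual R (Quotient a b)) (form a b)) := by
  rw [← LinearMap.ker_eq_bot, LinearMap.ker_eq_bot']
  intro g hg
  have := LinearMap.congr_fun hg (Submodule.Quotient.mk (Pi.single 0 1))
  exact ha.right (by simpa using this : g * a = 0 * a)

theorem surjective_toSpanSingleton_form (ha : IsRegular a) (hb : ∀ u, a ∣ b * u → a ∣ u) :
    Function.Surjective (LinearMap.toSpanSingleton R (Dual R (Quotient a b)) (form a b)) := by
  intro φ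
  set u := φ (Submodule.Quotient.mk (Pi.single 0 1))
  set v := φ (Submodule.Quotient.mk (Pi.single 1 1))
  have hrel : a * v = b * u := by
    have h0 : (a • Submodule.Quotient.mk (Pi.single 1 1) -
        b • Submodule.Quotient.mk (Pi.single 0 1) : Quotient a b) = 0 := by
      rw [← Submodule.Quotient.mk_smul, ← Submodule.Quotient.mk_smul, ← Submodule.Quotient.mk_sub,
        Submodule.Quotient.mk_eq_zero]
      exact Submodule.mem_span_singleton_self _
    simpa [sub_eq_zero] using φ.congr_arg h0
  obtain ⟨g, hg⟩ := hb u ⟨v, by rw [hrel]⟩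
  have hv : v = b * g := ha.left (show a * v = a * (b * g) by rw [hrel, hg]; ring)
  refine ⟨g, ?_⟩
  ext i
  fin_cases i
  · simp [← hg, u, mul_comm]
  · simp [← hv, v, mul_comm]

noncomputable def cokernelEvalEquiv (ha : IsRegular a) (hb : ∀ u, a ∣ b * u → a ∣ u) :
    (Dual R (Dual R (Quotient a b)) ⧸ LinearMap.range (Dual.eval R (Quotient a b))) ≃ₗ[R]
      R ⧸ Ideal.span {a, b} :=
  (Dual.cokernelEvalEquivOfBijective
      ⟨injective_toSpanSingleton_form ha, surjective_toSpanSingleton_form ha hb⟩).trans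
    (Submodule.quotEquivOfEq _ _ (range_form a b))

end Koszul

theorem stmt3 (k : Type*) [Field k] :
    Module.finrank k
      ((Module.Dual (MvPolynomial (Fin 2) k)
          (Module.Dual (MvPolynomial (Fin 2) k)
            ((Fin 2 → MvPolynomial (Fin 2) k) ⧸
              Submodule.span (MvPolynomial (Fin 2) k) {koszulRel k}))) ⧸
        LinearMap.range
          (Module.Dual.eval (MvPolynomial (Fin 2) k)
            ((Fin 2 → MvPolynomial (Fin 2) k) ⧸
              Submodule.span (MvPolynomial (Fin 2) k) {koszulRel k}))) = 1 := by
  have hx : IsRegular (X 0 : MvPolynomial (Fin 2) k) := isRegular_iff_ne_zero.2 (X_ne_zero 0)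
  have hy (u : MvPolynomial (Fin 2) k) (h : X 0 ∣ X 1 * u) : X 0 ∣ u :=
    (X_prime.dvd_or_dvd h).resolve_left (by simp [X_dvd_X])
  have hspan : Ideal.span {X 0, X 1} =
      Ideal.span (Set.range (X : Fin 2 → MvPolynomial (Fin 2) k)) := by
    congr 1
    ext p
    simp [Fin.exists_fin_two, eq_comm]
  -- `koszulRel k` unfolds to `Koszul.relation (X 0) (X 1)`.
  exact ((Koszul.cokernelEvalEquiv hx hy).trans (Submodule.quotEquivOfEq _ _ hspan)
    |>.restrictScalars k).finrank_eq.trans finrank_quotient_span_range_X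
end
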